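/- Bernoulli measures / Lebesgue singular functions (Example 2.1 (ii)): Let m ≥ 2, a_0,…,a_{m−1} ∈ (0,1) with ∑_{i=0}^{m−1} a_i = 1, and f_i(x) = a_i x + ∑_{j<i} a_j on X = [0,1]. For the unique continuous solution G of de Rham's equation: α = −(1/m) ∑_{i=0}^{m−1} log_m a_i, one has α ≥ 1 with equality if and only if a_i = 1/m for every i, and if a_i ≠ 1/m for some i then G′(t) = 0 for Lebesgue-a.e. t ∈ (0,1), i.e. G is a singular function. -/

import Mathlib

/-!
Write `μ` for the Bernoulli measure with weights `a_i`: it gives the `m`-adic cell of level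
`n` with digits `d_1 … d_n` the mass `a_{d_1} ⋯ a_{d_n}`. Iterating de Rham's equation gives
`G ((k + u) / m ^ n) = G (k / m ^ n) + μ(cell) * G u` for `u ∈ [0, 1]`, so `G` is the
distribution function of `μ`, hence nondecreasing, and where `G` is differentiable its
derivative is the limit of `m ^ n μ(I_n(t))` over the cells `I_n(t) ∋ t`. Now
`∫₀¹ √(m ^ n μ(I_n(t))) dt = (∑ √a_i / √m) ^ n`, and by strict concavity of `√` the ratio is
`< 1` unless every `a_i = 1 / m`; the integrals are then summable, so `m ^ n μ(I_n(t)) → 0`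
for a.e. `t`. Finally `α` is the average of `-log_m a_i`, and `α ≥ 1`, with equality iff all
`a_i = 1 / m`, is Jensen's inequality for the strictly concave `log`.
-/

open MeasureTheory Filter Set Topology

noncomputable section

/-- The first digit `A₁(t) = ⌊m t⌋` of the `m`-adic expansion of `t ∈ [0,1)`. -/
def A1 (m : ℕ) (t : ℝ) : ℕ := (⌊(m : ℝ) * t⌋).toNat

/-- The shift map `Ht = m t - ⌊m t⌋` on `[0,1)`. -/
def Hmap (m : ℕ) (t : ℝ) : ℝ := (m : ℝ) * t - ⌊(m : ℝ) * t⌋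

/-- The maps `f_i(x) = a_i x + ∑_{j<i} a_j` of Example 2.1 (ii). -/
def fBern (a : ℕ → ℝ) : ℕ → ℝ → ℝ := fun i x => a i * x + ∑ j ∈ Finset.range i, a j

/-- `α = ∫₀¹ -log_m |f'_{A₁(t)}(G(Ht))| dt` for the Bernoulli system. -/
def alphaBern (m : ℕ) (a : ℕ → ℝ) (G : ℝ → ℝ) : ℝ :=
  ∫ t in Set.Ico (0 : ℝ) 1, -Real.logb m |deriv (fBern a (A1 m t)) (G (Hmap m t))|

end

open scoped ENNReal

section Cells

variable {N k : ℕ} {t : ℝ}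

theorem Nat.floor_mul_eq_of_mem_Ico (ht : t ∈ Ico ((k : ℝ) / N) ((k + 1) / N)) :
    ⌊(N : ℝ) * t⌋₊ = k := by
  have hN : (0 : ℝ) < N := by
    by_contra! h
    simp [le_antisymm h N.cast_nonneg] at ht
  obtain ⟨h₁, h₂⟩ := ht
  rw [div_le_iff₀' hN] at h₁
  rw [lt_div_iff₀' hN] at h₂
  exact (Nat.floor_eq_iff ((Nat.cast_nonneg k).trans h₁)).2 ⟨h₁, h₂⟩

theorem Nat.floor_mul_lt_of_mem_Ico (hN : 0 < N) (ht : t ∈ Ico (0 : ℝ) 1) :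
    ⌊(N : ℝ) * t⌋₊ < N := by
  have hN' : (0 : ℝ) < N := Nat.cast_pos.2 hN
  rw [Nat.floor_lt (by nlinarith [ht.1])]
  nlinarith [ht.2]

theorem pairwise_disjoint_Ico_div (N : ℕ) :
    Pairwise (Function.onFun Disjoint fun k : ℕ => Ico ((k : ℝ) / N) ((k + 1) / N)) := by
  intro j k hjk
  refine Set.disjoint_left.2 fun t hj hk => hjk ?_
  rw [← Nat.floor_mul_eq_of_mem_Ico hj, ← Nat.floor_mul_eq_of_mem_Ico hk]

theorem Ico_zero_one_eq_biUnion_Ico_div (hN : 0 < N) :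
    Ico (0 : ℝ) 1 = ⋃ k ∈ Finset.range N, Ico ((k : ℝ) / N) ((k + 1) / N) := by
  have hN' : (0 : ℝ) < N := Nat.cast_pos.2 hN
  ext t
  simp only [mem_iUnion, Finset.mem_range, mem_Ico, exists_prop, div_le_iff₀' hN',
    lt_div_iff₀' hN']
  constructor
  · rintro ⟨ht₀, ht₁⟩
    exact ⟨⌊(N : ℝ) * t⌋₊, Nat.floor_mul_lt_of_mem_Ico hN ⟨ht₀, ht₁⟩,
      Nat.floor_le (by positivity), Nat.lt_floor_add_one _⟩
  · rintro ⟨k, hk, h₁, h₂⟩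
    have hk' : (k : ℝ) + 1 ≤ N := by exact_mod_cast hk
    constructor <;> nlinarith [(Nat.cast_nonneg k : (0 : ℝ) ≤ k)]

theorem volume_Ico_div (N k : ℕ) :
    volume (Ico ((k : ℝ) / N) ((k + 1) / N)) = ENNReal.ofReal (N : ℝ)⁻¹ := by
  rw [Real.volume_Ico, add_div, add_sub_cancel_left, one_div]

theorem setLIntegral_Ico_floor_mul (hN : 0 < N) (F : ℕ → ℝ≥0∞) :
    ∫⁻ t in Ico (0 : ℝ) 1, F ⌊(N : ℝ) * t⌋₊ = (∑ k ∈ Finset.range N, F k) / N := by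
  rw [Ico_zero_one_eq_biUnion_Ico_div hN,
    lintegral_biUnion_finset ((pairwise_disjoint_Ico_div N).set_pairwise _)
      (fun _ _ => measurableSet_Ico), div_eq_mul_inv, Finset.sum_mul]
  refine Finset.sum_congr rfl fun k _ => ?_
  rw [setLIntegral_congr_fun measurableSet_Ico fun t ht => by
      rw [Nat.floor_mul_eq_of_mem_Ico ht],
    setLIntegral_const, volume_Ico_div, ENNReal.ofReal_inv_of_pos (Nat.cast_pos.2 hN),
    ENNReal.ofReal_natCast]

theorem setIntegral_Ico_floor_mul (hN : 0 < N) (F : ℕ → ℝ) :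
    ∫ t in Ico (0 : ℝ) 1, F ⌊(N : ℝ) * t⌋₊ = (∑ k ∈ Finset.range N, F k) / N := by
  have hcell : ∀ k, EqOn (fun t => F ⌊(N : ℝ) * t⌋₊) (fun _ => F k)
      (Ico ((k : ℝ) / N) ((k + 1) / N)) := fun k t ht => by
    simp only [Nat.floor_mul_eq_of_mem_Ico ht]
  rw [Ico_zero_one_eq_biUnion_Ico_div hN,
    integral_biUnion_finset _ (fun _ _ => measurableSet_Ico)
      ((pairwise_disjoint_Ico_div N).set_pairwise _)
      fun k _ => (integrableOn_const measure_Ico_lt_top.ne).congr_fun (hcell k).symm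
        measurableSet_Ico, Finset.sum_div]
  refine Finset.sum_congr rfl fun k _ => ?_
  rw [setIntegral_congr_fun measurableSet_Ico (hcell k), setIntegral_const, measureReal_def,
    volume_Ico_div, ENNReal.toReal_ofReal (by positivity), smul_eq_mul, inv_mul_eq_div]

end Cells

theorem MeasureTheory.ae_tendsto_zero_of_tsum_lintegral_ne_top {α : Type*} [MeasurableSpace α]
    {μ : Measure α} {f : ℕ → α → ℝ≥0∞} (hf : ∀ n, AEMeasurable (f n) μ)
    (h : ∑' n, ∫⁻ x, f n x ∂μ ≠ ∞) : ∀ᵐ x ∂μ, Tendsto (fun n => f n x) atTop (𝓝 0) := by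
  rw [← lintegral_tsum hf] at h
  filter_upwards [ae_lt_top' (AEMeasurable.tsum hf) h] with x hx
  exact ENNReal.tendsto_atTop_zero_of_tsum_ne_top hx.ne

section Jensen

variable {ι : Type*} {s : Set ℝ} {φ : ℝ → ℝ} {t : Finset ι} {p : ι → ℝ}

theorem card_pos_of_sum_eq_one (hsum : ∑ i ∈ t, p i = 1) : (0 : ℝ) < t.card :=
  Nat.cast_pos.2 (Finset.card_pos.2 (Finset.nonempty_of_sum_ne_zero (hsum ▸ one_ne_zero)))

theorem sum_inv_card_smul_of_sum_eq_one (hsum : ∑ i ∈ t, p i = 1) :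
    ∑ i ∈ t, (t.card : ℝ)⁻¹ • p i = (t.card : ℝ)⁻¹ := by
  rw [← Finset.smul_sum, hsum, smul_eq_mul, mul_one]

theorem sum_inv_card_of_sum_eq_one (hsum : ∑ i ∈ t, p i = 1) :
    ∑ _i ∈ t, (t.card : ℝ)⁻¹ = 1 := by
  rw [Finset.sum_const, nsmul_eq_mul, mul_inv_cancel₀ (card_pos_of_sum_eq_one hsum).ne']

theorem ConcaveOn.sum_le_card_mul_map_inv_card (hφ : ConcaveOn ℝ s φ)
    (hp : ∀ i ∈ t, p i ∈ s) (hsum : ∑ i ∈ t, p i = 1) :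
    ∑ i ∈ t, φ (p i) ≤ t.card * φ (t.card : ℝ)⁻¹ := by
  have hcard := card_pos_of_sum_eq_one hsum
  have h := hφ.le_map_sum (fun _ _ => by positivity) (sum_inv_card_of_sum_eq_one hsum) hp
  rw [sum_inv_card_smul_of_sum_eq_one hsum, ← Finset.smul_sum, smul_eq_mul,
    inv_mul_le_iff₀ hcard] at h
  exact h

theorem StrictConcaveOn.sum_eq_card_mul_map_inv_card_iff (hφ : StrictConcaveOn ℝ s φ)
    (hp : ∀ i ∈ t, p i ∈ s) (hsum : ∑ i ∈ t, p i = 1) :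
    ∑ i ∈ t, φ (p i) = t.card * φ (t.card : ℝ)⁻¹ ↔ ∀ i ∈ t, p i = (t.card : ℝ)⁻¹ := by
  have hcard := card_pos_of_sum_eq_one hsum
  have h := hφ.map_sum_eq_iff (fun _ _ => by positivity) (sum_inv_card_of_sum_eq_one hsum) hp
  rw [sum_inv_card_smul_of_sum_eq_one hsum, ← Finset.smul_sum, smul_eq_mul, eq_comm,
    inv_mul_eq_iff_eq_mul₀ hcard.ne'] at h
  exact h

end Jensen

theorem Finset.sum_range_mul_eq_sum_sum {M : Type*} [AddCommMonoid M] (f : ℕ → M) (c d : ℕ) :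
    ∑ k ∈ Finset.range (c * d), f k =
      ∑ i ∈ Finset.range c, ∑ j ∈ Finset.range d, f (i * d + j) := by
  induction c with
  | zero => simp
  | succ c ih => rw [Nat.succ_mul, Finset.sum_range_add, ih, Finset.sum_range_succ]

/-- `bernoulliMass m a n k` is the product of the weights `a` over the `n` base-`m` digits of
`k`, most significant first: the Bernoulli measure of the cell `[k / m ^ n, (k + 1) / m ^ n]`. -/
def bernoulliMass (m : ℕ) (a : ℕ → ℝ) : ℕ → ℕ → ℝ
  | 0, _ => 1
  | n + 1, k => a (k / m ^ n) * bernoulliMass m a n (k % m ^ n)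

section BernoulliMass

variable {m : ℕ} {a : ℕ → ℝ}

theorem bernoulliMass_succ_mul_add {n j : ℕ} (i : ℕ) (hj : j < m ^ n) :
    bernoulliMass m a (n + 1) (i * m ^ n + j) = a i * bernoulliMass m a n j := by
  have hpos : 0 < m ^ n := Nat.zero_lt_of_lt hj
  simp only [bernoulliMass, mul_comm i, Nat.mul_add_div hpos, Nat.div_eq_of_lt hj, add_zero,
    Nat.mul_add_mod, Nat.mod_eq_of_lt hj]

theorem Nat.div_pow_lt_of_lt_pow_succ {n k : ℕ} (hk : k < m ^ (n + 1)) : k / m ^ n < m :=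
  Nat.div_lt_of_lt_mul (by rwa [← pow_succ])

theorem Nat.mod_pow_lt_of_lt_pow_succ {n k : ℕ} (hk : k < m ^ (n + 1)) : k % m ^ n < m ^ n :=
  Nat.mod_lt _ (Nat.pos_of_ne_zero fun h => by simp_all [pow_succ])

theorem bernoulliMass_nonneg (ha : ∀ i < m, 0 ≤ a i) :
    ∀ {n k : ℕ}, k < m ^ n → 0 ≤ bernoulliMass m a n k
  | 0, _, _ => zero_le_one
  | _ + 1, _, hk => mul_nonneg (ha _ (Nat.div_pow_lt_of_lt_pow_succ hk))
      (bernoulliMass_nonneg ha (Nat.mod_pow_lt_of_lt_pow_succ hk))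

theorem sqrt_bernoulliMass (ha : ∀ i < m, 0 ≤ a i) :
    ∀ {n k : ℕ}, k < m ^ n → √(bernoulliMass m a n k) = bernoulliMass m (fun i => √(a i)) n k
  | 0, _, _ => Real.sqrt_one
  | _ + 1, _, hk => by
    rw [bernoulliMass, bernoulliMass, Real.sqrt_mul (ha _ (Nat.div_pow_lt_of_lt_pow_succ hk)),
      sqrt_bernoulliMass ha (Nat.mod_pow_lt_of_lt_pow_succ hk)]

theorem sum_bernoulliMass (a : ℕ → ℝ) (n : ℕ) :
    ∑ k ∈ Finset.range (m ^ n), bernoulliMass m a n k = (∑ i ∈ Finset.range m, a i) ^ n := by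
  induction n with
  | zero => simp [bernoulliMass]
  | succ n ih =>
    rw [pow_succ', Finset.sum_range_mul_eq_sum_sum, pow_succ', ← ih, Finset.sum_mul]
    refine Finset.sum_congr rfl fun i _ => ?_
    rw [Finset.mul_sum]
    exact Finset.sum_congr rfl fun j hj =>
      bernoulliMass_succ_mul_add i (Finset.mem_range.1 hj)

theorem lintegral_sqrt_bernoulliMass_floor (hm : 0 < m) (ha : ∀ i < m, 0 ≤ a i) (n : ℕ) :
    ∫⁻ t in Ico (0 : ℝ) 1, ENNReal.ofReal √(bernoulliMass m a n ⌊(m : ℝ) ^ n * t⌋₊ * m ^ n)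
      = ENNReal.ofReal ((∑ i ∈ Finset.range m, √(a i)) / √m) ^ n := by
  have hmn : 0 < m ^ n := pow_pos hm n
  have h := setLIntegral_Ico_floor_mul hmn
    fun k => ENNReal.ofReal (√(bernoulliMass m a n k * m ^ n))
  have hm2 : (m : ℝ) ^ n = √m ^ n * √m ^ n := by
    rw [← mul_pow, Real.mul_self_sqrt (Nat.cast_nonneg m)]
  have hsqrt_pow : √((m : ℝ) ^ n) = √m ^ n := by
    rw [hm2, Real.sqrt_mul_self (by positivity)]
  have hterm : ∀ k ∈ Finset.range (m ^ n), √(bernoulliMass m a n k * m ^ n)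
      = bernoulliMass m (fun i => √(a i)) n k * √m ^ n := fun k hk => by
    rw [Real.sqrt_mul' _ (by positivity), sqrt_bernoulliMass ha (Finset.mem_range.1 hk),
      hsqrt_pow]
  push_cast at h
  rw [h, ← ENNReal.ofReal_sum_of_nonneg fun _ _ => Real.sqrt_nonneg _,
    Finset.sum_congr rfl hterm, ← Finset.sum_mul, sum_bernoulliMass,
    ← ENNReal.ofReal_pow (by positivity),
    ← ENNReal.ofReal_natCast, ← ENNReal.ofReal_pow (Nat.cast_nonneg m),
    ← ENNReal.ofReal_div_of_pos (by positivity)]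
  congr 1
  rw [hm2, div_pow]
  field_simp

theorem ae_tendsto_bernoulliMass_floor_mul_pow (hm : 0 < m) (ha : ∀ i < m, 0 ≤ a i)
    (hsqrt : ∑ i ∈ Finset.range m, √(a i) < √m) :
    ∀ᵐ t ∂volume.restrict (Ico (0 : ℝ) 1),
      Tendsto (fun n => bernoulliMass m a n ⌊(m : ℝ) ^ n * t⌋₊ * m ^ n) atTop (𝓝 0) := by
  have hr : ENNReal.ofReal ((∑ i ∈ Finset.range m, √(a i)) / √m) < 1 := by
    rw [ENNReal.ofReal_lt_one, div_lt_one (by positivity)]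
    exact hsqrt
  have hmeas : ∀ n, AEMeasurable (fun t : ℝ =>
      ENNReal.ofReal √(bernoulliMass m a n ⌊(m : ℝ) ^ n * t⌋₊ * m ^ n))
      (volume.restrict (Ico (0 : ℝ) 1)) := fun n =>
    (Measurable.ennreal_ofReal <| Real.continuous_sqrt.measurable.comp <|
      (measurable_from_nat.comp (measurable_const.mul measurable_id).nat_floor).mul_const _)
      |>.aemeasurable
  filter_upwards [ae_tendsto_zero_of_tsum_lintegral_ne_top hmeas (by
    simp_rw [lintegral_sqrt_bernoulliMass_floor hm ha]
    exact (tsum_geometric_lt_top.2 hr).ne), ae_restrict_mem measurableSet_Ico] with t ht ht01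
  have hsqrt_lim := (ENNReal.tendsto_toReal_zero_iff (fun _ => ENNReal.ofReal_ne_top)).2 ht
  simp only [ENNReal.toReal_ofReal (Real.sqrt_nonneg _)] at hsqrt_lim
  have hnonneg : ∀ n, 0 ≤ bernoulliMass m a n ⌊(m : ℝ) ^ n * t⌋₊ * m ^ n := fun n => by
    have hk := Nat.floor_mul_lt_of_mem_Ico (pow_pos hm n) ht01
    push_cast at hk
    exact mul_nonneg (bernoulliMass_nonneg ha hk) (by positivity)
  have hsq := hsqrt_lim.pow 2
  rw [zero_pow two_ne_zero] at hsq
  exact hsq.congr fun n => Real.sq_sqrt (hnonneg n)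

end BernoulliMass

open Asymptotics in
theorem HasDerivAt.tendsto_slope_of_le_of_le {f : ℝ → ℝ} {L t : ℝ} (hf : HasDerivAt f L t)
    {ι : Type*} {l : Filter ι} {x y : ι → ℝ} (hx : ∀ n, x n ≤ t) (hy : ∀ n, t ≤ y n)
    (hxy : ∀ n, x n < y n) (hlen : Tendsto (fun n => y n - x n) l (𝓝 0)) :
    Tendsto (fun n => slope f (x n) (y n)) l (𝓝 L) := by
  set e : ℝ → ℝ := fun u => f u - f t - (u - t) • L
  have hx_lim : Tendsto x l (𝓝 t) := by
    refine tendsto_of_tendsto_of_tendsto_of_le_of_le (g := fun n => t - (y n - x n)) ?_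
      tendsto_const_nhds (fun n => by linarith [hy n]) hx
    simpa using tendsto_const_nhds.sub hlen
  have hy_lim : Tendsto y l (𝓝 t) := by
    refine tendsto_of_tendsto_of_tendsto_of_le_of_le (h := fun n => t + (y n - x n))
      tendsto_const_nhds ?_ hy (fun n => by linarith [hx n])
    simpa using tendsto_const_nhds.add hlen
  have hex : (fun n => e (x n)) =o[l] fun n => y n - x n :=
    (hf.isLittleO.comp_tendsto hx_lim).trans_isBigO <| IsBigO.of_bound' <| .of_forall fun n => by
      simp only [Function.comp, Real.norm_eq_abs]
      rw [abs_of_nonpos (by linarith [hx n]), abs_of_pos (by linarith [hxy n])]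
      linarith [hy n]
  have hey : (fun n => e (y n)) =o[l] fun n => y n - x n :=
    (hf.isLittleO.comp_tendsto hy_lim).trans_isBigO <| IsBigO.of_bound' <| .of_forall fun n => by
      simp only [Function.comp, Real.norm_eq_abs]
      rw [abs_of_nonneg (by linarith [hy n]), abs_of_pos (by linarith [hxy n])]
      linarith [hx n]
  have hslope : ∀ n, slope f (x n) (y n) = L + (e (y n) - e (x n)) / (y n - x n) := fun n => by
    have : y n - x n ≠ 0 := (sub_pos.2 (hxy n)).ne'
    simp only [e, slope_def_field, smul_eq_mul]
    field_simp
    ring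
  simpa [hslope] using tendsto_const_nhds.add (hey.sub hex).tendsto_div_nhds_zero

theorem HasDerivAt.tendsto_slope_floor_pow {f : ℝ → ℝ} {L t : ℝ} (hf : HasDerivAt f L t)
    {m : ℕ} (hm : 1 < m) (ht : 0 ≤ t) :
    Tendsto (fun n : ℕ => slope f (⌊(m : ℝ) ^ n * t⌋₊ / (m : ℝ) ^ n)
      ((⌊(m : ℝ) ^ n * t⌋₊ + 1) / (m : ℝ) ^ n)) atTop (𝓝 L) := by
  have hm' : (1 : ℝ) < m := Nat.one_lt_cast.2 hm
  have hN : ∀ n : ℕ, (0 : ℝ) < (m : ℝ) ^ n := fun n => by positivity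
  refine hf.tendsto_slope_of_le_of_le (fun n => ?_) (fun n => ?_)
    (fun n => div_lt_div_of_pos_right (lt_add_one _) (hN n)) ?_
  · rw [div_le_iff₀' (hN n)]
    exact Nat.floor_le (by positivity)
  · rw [le_div_iff₀' (hN n)]
    exact (Nat.lt_floor_add_one _).le
  · simp_rw [add_div, add_sub_cancel_left, one_div]
    exact tendsto_inv_atTop_zero.comp (tendsto_pow_atTop_atTop_of_one_lt hm')

def SolvesDeRham (m : ℕ) (f : ℕ → ℝ → ℝ) (G : ℝ → ℝ) : Prop :=
  ∀ i < m, ∀ t : ℝ, (i : ℝ) / m ≤ t → t ≤ ((i : ℝ) + 1) / m → G t = f i (G ((m : ℝ) * t - i))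

theorem add_div_mem_Icc {N j : ℕ} {u : ℝ} (hj : j < N) (hu : u ∈ Icc (0 : ℝ) 1) :
    ((j : ℝ) + u) / N ∈ Icc (0 : ℝ) 1 := by
  have hN : (0 : ℝ) < N := Nat.cast_pos.2 (Nat.zero_lt_of_lt hj)
  have hj' : (j : ℝ) + 1 ≤ N := by exact_mod_cast hj
  rw [mem_Icc, le_div_iff₀ hN, div_le_iff₀ hN]
  constructor <;> linarith [hu.1, hu.2, (Nat.cast_nonneg j : (0 : ℝ) ≤ j)]

theorem exists_eq_add_div_of_mem_Icc {N : ℕ} (hN : 0 < N) {t : ℝ} (ht : t ∈ Icc (0 : ℝ) 1) :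
    ∃ k < N, ∃ u ∈ Icc (0 : ℝ) 1, t = (k + u) / N := by
  have hN' : (0 : ℝ) < N := Nat.cast_pos.2 hN
  rcases ht.2.lt_or_eq with ht1 | rfl
  · refine ⟨⌊(N : ℝ) * t⌋₊, Nat.floor_mul_lt_of_mem_Ico hN ⟨ht.1, ht1⟩,
      N * t - ⌊(N : ℝ) * t⌋₊, ⟨sub_nonneg.2 (Nat.floor_le (by nlinarith [ht.1])), ?_⟩,
      by field_simp; ring⟩
    linarith [Nat.lt_floor_add_one ((N : ℝ) * t)]
  · exact ⟨N - 1, Nat.sub_lt hN one_pos, 1, right_mem_Icc.2 zero_le_one, by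
      rw [Nat.cast_pred hN, sub_add_cancel, div_self hN'.ne']⟩

section DeRham

variable {m : ℕ} {a : ℕ → ℝ} {G : ℝ → ℝ}

theorem SolvesDeRham.apply_add_div {f : ℕ → ℝ → ℝ} (hG : SolvesDeRham m f G) {i : ℕ}
    (hi : i < m) {u : ℝ} (hu : u ∈ Icc (0 : ℝ) 1) : G ((i + u) / m) = f i (G u) := by
  have hm : (0 : ℝ) < m := Nat.cast_pos.2 (Nat.zero_lt_of_lt hi)
  rw [hG i hi _ (by gcongr; linarith [hu.1]) (by gcongr; linarith [hu.2]),
    mul_div_cancel₀ _ hm.ne', add_sub_cancel_left]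

theorem SolvesDeRham.eq_add_bernoulliMass_mul (hG : SolvesDeRham m (fBern a) G)
    (hG0 : G 0 = 0) : ∀ {n k : ℕ}, k < m ^ n → ∀ {u : ℝ}, u ∈ Icc (0 : ℝ) 1 →
      G ((k + u) / m ^ n) = G (k / m ^ n) + bernoulliMass m a n k * G u
  | 0, k, hk, u, _ => by
    obtain rfl : k = 0 := by simpa using hk
    simp [bernoulliMass, hG0]
  | n + 1, k, hk, u, hu => by
    -- peel off the leading digit `i` of `k`; the cell of `k` is the image of the cell of `j`
    -- under the branch `x ↦ (i + x) / m`
    obtain ⟨i, j, hi, hj, rfl⟩ : ∃ i j, i < m ∧ j < m ^ n ∧ k = i * m ^ n + j :=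
      ⟨_, _, Nat.div_pow_lt_of_lt_pow_succ hk, Nat.mod_pow_lt_of_lt_pow_succ hk,
        (Nat.div_add_mod' k _).symm⟩
    have hm : (0 : ℝ) < m := Nat.cast_pos.2 (Nat.zero_lt_of_lt hi)
    have hsplit : ∀ v : ℝ, (((i * m ^ n + j : ℕ) : ℝ) + v) / (m : ℝ) ^ (n + 1)
        = (i + (j + v) / m ^ n) / m := fun v => by
      push_cast
      field_simp
      ring
    have h0 := hsplit 0
    rw [add_zero, add_zero] at h0
    rw [hsplit, h0, hG.apply_add_div hi (by simpa using add_div_mem_Icc hj hu),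
      hG.apply_add_div hi (by simpa using add_div_mem_Icc hj (left_mem_Icc.2 zero_le_one)),
      SolvesDeRham.eq_add_bernoulliMass_mul hG hG0 hj hu, bernoulliMass_succ_mul_add i hj, fBern,
      fBern]
    ring

theorem SolvesDeRham.add_one_div_eq (hG : SolvesDeRham m (fBern a) G) (hG0 : G 0 = 0)
    (hG1 : G 1 = 1) {n k : ℕ} (hk : k < m ^ n) :
    G ((k + 1) / m ^ n) = G (k / m ^ n) + bernoulliMass m a n k := by
  rw [hG.eq_add_bernoulliMass_mul hG0 hk (right_mem_Icc.2 zero_le_one), hG1, mul_one]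

theorem SolvesDeRham.div_eq_sum (hG : SolvesDeRham m (fBern a) G) (hG0 : G 0 = 0)
    (hG1 : G 1 = 1) {n : ℕ} : ∀ {k : ℕ}, k ≤ m ^ n →
      G (k / m ^ n) = ∑ j ∈ Finset.range k, bernoulliMass m a n j
  | 0, _ => by simp [hG0]
  | k + 1, hk => by
    rw [Nat.cast_succ, hG.add_one_div_eq hG0 hG1 hk, hG.div_eq_sum hG0 hG1 (Nat.le_of_lt hk),
      Finset.sum_range_succ]

theorem SolvesDeRham.apply_div_mono (ha : ∀ i < m, 0 ≤ a i) (hG : SolvesDeRham m (fBern a) G)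
    (hG0 : G 0 = 0) (hG1 : G 1 = 1) {n j k : ℕ} (hjk : j ≤ k) (hk : k ≤ m ^ n) :
    G (j / m ^ n) ≤ G (k / m ^ n) := by
  rw [hG.div_eq_sum hG0 hG1 (hjk.trans hk), hG.div_eq_sum hG0 hG1 hk]
  exact Finset.sum_le_sum_of_subset_of_nonneg (Finset.range_subset_range.2 hjk)
    fun i hi _ => bernoulliMass_nonneg ha (by simp at hi; omega)

theorem SolvesDeRham.apply_add_div_mem_Icc (ha : ∀ i < m, 0 ≤ a i)
    (hG : SolvesDeRham m (fBern a) G) (hGX : MapsTo G (Icc 0 1) (Icc 0 1)) (hG0 : G 0 = 0)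
    (hG1 : G 1 = 1) {n k : ℕ} (hk : k < m ^ n) {u : ℝ} (hu : u ∈ Icc (0 : ℝ) 1) :
    G ((k + u) / m ^ n) ∈ Icc (G (k / m ^ n)) (G ((k + 1) / m ^ n)) := by
  rw [hG.eq_add_bernoulliMass_mul hG0 hk hu, hG.add_one_div_eq hG0 hG1 hk]
  have hmass := bernoulliMass_nonneg ha hk
  have hGu := hGX hu
  constructor <;> nlinarith [hGu.1, hGu.2]

theorem SolvesDeRham.monotoneOn (hm : 1 < m) (ha : ∀ i < m, 0 ≤ a i)
    (hG : SolvesDeRham m (fBern a) G) (hGX : MapsTo G (Icc 0 1) (Icc 0 1)) (hG0 : G 0 = 0)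
    (hG1 : G 1 = 1) : MonotoneOn G (Icc (0 : ℝ) 1) := by
  intro s hs t ht hst
  rcases hst.eq_or_lt with rfl | hst
  · rfl
  -- at a level `n` with `m⁻ⁿ < t - s`, the points `s` and `t` lie in different cells
  obtain ⟨n, hn⟩ := pow_unbounded_of_one_lt (t - s)⁻¹ (Nat.one_lt_cast.2 hm)
  have hN : 0 < m ^ n := pow_pos (by omega) n
  obtain ⟨ks, hks, us, hus, rfl⟩ := exists_eq_add_div_of_mem_Icc hN hs
  obtain ⟨kt, hkt, ut, hut, rfl⟩ := exists_eq_add_div_of_mem_Icc hN ht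
  simp only [Nat.cast_pow] at hn hst ⊢
  have hlt : ks < kt := by
    by_contra! hle
    have hle' : (kt : ℝ) ≤ ks := by exact_mod_cast hle
    rw [inv_lt_iff_one_lt_mul₀ (sub_pos.2 hst), ← sub_div,
      mul_div_cancel₀ _ (by positivity)] at hn
    linarith [hus.1, hut.2]
  calc G ((ks + us) / m ^ n) ≤ G ((ks + 1) / m ^ n) :=
        (hG.apply_add_div_mem_Icc ha hGX hG0 hG1 hks hus).2
    _ = G (((ks + 1 : ℕ) : ℝ) / m ^ n) := by push_cast; rfl
    _ ≤ G (kt / m ^ n) := hG.apply_div_mono ha hG0 hG1 hlt hkt.le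
    _ ≤ G ((kt + ut) / m ^ n) := (hG.apply_add_div_mem_Icc ha hGX hG0 hG1 hkt hut).1

theorem SolvesDeRham.eq_zero_of_hasDerivAt (hm : 1 < m) (hG : SolvesDeRham m (fBern a) G)
    (hG0 : G 0 = 0) (hG1 : G 1 = 1) {t L : ℝ} (ht : t ∈ Ico (0 : ℝ) 1) (hL : HasDerivAt G L t)
    (hlim : Tendsto (fun n => bernoulliMass m a n ⌊(m : ℝ) ^ n * t⌋₊ * m ^ n) atTop (𝓝 0)) :
    L = 0 := by
  refine tendsto_nhds_unique ((hL.tendsto_slope_floor_pow hm ht.1).congr fun n => ?_) hlim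
  have hk := Nat.floor_mul_lt_of_mem_Ico (pow_pos (by omega : 0 < m) n) ht
  push_cast at hk
  rw [slope_def_field, hG.add_one_div_eq hG0 hG1 hk, add_sub_cancel_left, ← sub_div,
    add_sub_cancel_left]
  field_simp

theorem SolvesDeRham.ae_hasDerivWithinAt_zero (hm : 1 < m) (ha : ∀ i < m, 0 ≤ a i)
    (hsqrt : ∑ i ∈ Finset.range m, √(a i) < √m) (hG : SolvesDeRham m (fBern a) G)
    (hGX : MapsTo G (Icc 0 1) (Icc 0 1)) (hG0 : G 0 = 0) (hG1 : G 1 = 1) :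
    ∀ᵐ t ∂volume.restrict (Ioo (0 : ℝ) 1), HasDerivWithinAt G 0 (Icc (0 : ℝ) 1) t := by
  filter_upwards [ae_restrict_of_ae_restrict_of_subset Ioo_subset_Icc_self
      ((hG.monotoneOn hm ha hGX hG0 hG1).ae_differentiableWithinAt measurableSet_Icc),
    ae_restrict_of_ae_restrict_of_subset Ioo_subset_Ico_self
      (ae_tendsto_bernoulliMass_floor_mul_pow (by omega) ha hsqrt),
    ae_restrict_mem measurableSet_Ioo] with t hdiff hlim ht
  have hL := (hdiff.differentiableAt (Icc_mem_nhds ht.1 ht.2)).hasDerivAt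
  rw [hG.eq_zero_of_hasDerivAt hm hG0 hG1 (Ioo_subset_Ico_self ht) hL hlim] at hL
  exact hL.hasDerivWithinAt

end DeRham


theorem hasDerivAt_fBern (a : ℕ → ℝ) (i : ℕ) (x : ℝ) : HasDerivAt (fBern a i) (a i) x :=
  (((hasDerivAt_id x).const_mul (a i)).add_const _).congr_deriv (mul_one _)

section Alpha

variable {m : ℕ} {a : ℕ → ℝ} {G : ℝ → ℝ}

theorem alphaBern_eq (hm : 0 < m) (ha : ∀ i < m, 0 < a i) :
    alphaBern m a G = -(1 / m) * ∑ i ∈ Finset.range m, Real.logb m (a i) := by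
  have hA1 : ∀ t, A1 m t = ⌊(m : ℝ) * t⌋₊ := fun t => Int.floor_toNat _
  simp only [alphaBern, hA1, fun i x => (hasDerivAt_fBern a i x).deriv]
  rw [setIntegral_Ico_floor_mul hm fun k => -Real.logb m |a k|, Finset.sum_neg_distrib,
    Finset.sum_congr rfl fun i hi => by rw [abs_of_pos (ha i (Finset.mem_range.1 hi))]]
  ring

theorem alphaBern_eq_one_add (hm : 1 < m) (ha : ∀ i < m, 0 < a i) :
    alphaBern m a G = 1 + (m * Real.log (1 / m) - ∑ i ∈ Finset.range m, Real.log (a i))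
      / (m * Real.log m) := by
  have hlogm : 0 < Real.log m := Real.log_pos (Nat.one_lt_cast.2 hm)
  rw [alphaBern_eq (by omega) ha]
  simp only [Real.logb, ← Finset.sum_div, one_div, Real.log_inv]
  field_simp
  ring

theorem one_le_alphaBern (hm : 1 < m) (ha : ∀ i < m, 0 < a i)
    (hsum : ∑ i ∈ Finset.range m, a i = 1) : 1 ≤ alphaBern m a G := by
  have hjensen := strictConcaveOn_log_Ioi.concaveOn.sum_le_card_mul_map_inv_card
    (fun i hi => ha i (Finset.mem_range.1 hi)) hsum
  rw [Finset.card_range, ← one_div] at hjensen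
  rw [alphaBern_eq_one_add hm ha, le_add_iff_nonneg_right]
  exact div_nonneg (sub_nonneg.2 hjensen) (by positivity)

theorem alphaBern_eq_one_iff (hm : 1 < m) (ha : ∀ i < m, 0 < a i)
    (hsum : ∑ i ∈ Finset.range m, a i = 1) : alphaBern m a G = 1 ↔ ∀ i < m, a i = 1 / m := by
  have hjensen := strictConcaveOn_log_Ioi.sum_eq_card_mul_map_inv_card_iff
    (fun i hi => ha i (Finset.mem_range.1 hi)) hsum
  have hlogm : 0 < Real.log m := Real.log_pos (Nat.one_lt_cast.2 hm)
  simp only [Finset.card_range, Finset.mem_range, ← one_div] at hjensen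
  rw [alphaBern_eq_one_add hm ha, add_eq_left, div_eq_zero_iff, or_iff_left (by positivity),
    sub_eq_zero, eq_comm, hjensen]

end Alpha

theorem sum_sqrt_lt_sqrt {m : ℕ} {a : ℕ → ℝ} (ha : ∀ i < m, 0 ≤ a i)
    (hsum : ∑ i ∈ Finset.range m, a i = 1) (hne : ∃ i < m, a i ≠ 1 / m) :
    ∑ i ∈ Finset.range m, √(a i) < √m := by
  have hmem : ∀ i ∈ Finset.range m, a i ∈ Ici 0 := fun i hi => ha i (Finset.mem_range.1 hi)
  have hle := Real.strictConcaveOn_sqrt.concaveOn.sum_le_card_mul_map_inv_card hmem hsum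
  have heq := Real.strictConcaveOn_sqrt.sum_eq_card_mul_map_inv_card_iff hmem hsum
  simp only [Finset.card_range, Finset.mem_range, ← one_div] at hle heq
  obtain ⟨i, hi, hai⟩ := hne
  refine (hle.lt_of_ne fun h => hai (heq.1 h i hi)).trans_eq ?_
  rw [one_div, Real.sqrt_inv, ← div_eq_mul_inv, Real.div_sqrt]

theorem bernoulli_deRham_singular (m : ℕ) (hm : 2 ≤ m) (a : ℕ → ℝ)
    (ha : ∀ i < m, a i ∈ Set.Ioo (0 : ℝ) 1)
    (hsum : ∑ i ∈ Finset.range m, a i = 1)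
    (G : ℝ → ℝ)
    (hGX : Set.MapsTo G (Set.Icc 0 1) (Set.Icc 0 1))
    (hGeq : ∀ i < m, ∀ t : ℝ, (i : ℝ) / m ≤ t → t ≤ ((i : ℝ) + 1) / m →
      G t = fBern a i (G ((m : ℝ) * t - i)))
    (hG0 : G 0 = 0) (hG1 : G 1 = 1) :
    alphaBern m a G = -(1 / m : ℝ) * ∑ i ∈ Finset.range m, Real.logb m (a i) ∧
    1 ≤ alphaBern m a G ∧
    (alphaBern m a G = 1 ↔ ∀ i < m, a i = 1 / m) ∧
    ((∃ i < m, a i ≠ 1 / m) →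
      MonotoneOn G (Set.Icc (0 : ℝ) 1) ∧
      ∀ᵐ t ∂(volume.restrict (Set.Ioo (0 : ℝ) 1)),
        HasDerivWithinAt G 0 (Set.Icc (0 : ℝ) 1) t) := by
  have hm1 : 1 < m := by omega
  have hpos : ∀ i < m, 0 < a i := fun i hi => (ha i hi).1
  have hnonneg : ∀ i < m, 0 ≤ a i := fun i hi => (hpos i hi).le
  have hG : SolvesDeRham m (fBern a) G := hGeq
  exact ⟨alphaBern_eq (by omega) hpos, one_le_alphaBern hm1 hpos hsum,
    alphaBern_eq_one_iff hm1 hpos hsum, fun hne => ⟨hG.monotoneOn hm1 hnonneg hGX hG0 hG1,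
      hG.ae_hasDerivWithinAt_zero hm1 hnonneg (sum_sqrt_lt_sqrt hnonneg hsum hne) hGX hG0 hG1⟩⟩
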